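/- Let F be a formal group law over a complete local ring R, let A be a finite abelian group and ℓ : A → R a homomorphism to the formal group of F (ℓ(a) topologically nilpotent, ℓ(a+b) = F(ℓ(a),ℓ(b))) such that K = ∏_{a∈A}(x - ℓ(a)) generates the ideal of a subgroup divisor. Then the power series y(x) = ∏_{a ∈ A} (x +_F ℓ(a)) ∈ R[[x]] satisfies y(x) = ε·∏_{a∈A}(x - ℓ(a)) for a unit ε of R[[x]]; in particular y has x-adic valuation exactly |A| modulo the maximal ideal contributions, and y(ℓ(b)) = 0 for each b ∈ A. -/

import Mathlib

open Finset

noncomputable section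

namespace FGL

variable {R : Type*} [CommRing R]

/-- The monomial index `x^i y^j` for two-variable power series. -/
def mono (i j : ℕ) : Fin 2 →₀ ℕ := Finsupp.single 0 i + Finsupp.single 1 j

/-- Substitute `(g(t), t)` into a two-variable power series `F`; this is the honest
substitution `F(g(t), t)` whenever `g` has zero constant term. -/
def subst2 (F : MvPowerSeries (Fin 2) R) (g : PowerSeries R) : PowerSeries R :=
  PowerSeries.mk fun n => ∑ i ∈ Finset.range (n + 1), ∑ j ∈ Finset.range (n + 1),
    MvPowerSeries.coeff (mono i j) F * PowerSeries.coeff (n - j) (g ^ i)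

/-- The three-variable power series `F(F(x,y),z)` (for `F` with zero constant term). -/
def assocLeft (F : MvPowerSeries (Fin 2) R) : MvPowerSeries (Fin 3) R :=
  fun m => ∑ i ∈ Finset.range (m 0 + m 1 + 1),
    MvPowerSeries.coeff (mono i (m 2)) F *
      MvPowerSeries.coeff (mono (m 0) (m 1)) (F ^ i)

/-- The three-variable power series `F(x,F(y,z))` (for `F` with zero constant term). -/
def assocRight (F : MvPowerSeries (Fin 2) R) : MvPowerSeries (Fin 3) R :=
  fun m => ∑ j ∈ Finset.range (m 1 + m 2 + 1),
    MvPowerSeries.coeff (mono (m 0) j) F *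
      MvPowerSeries.coeff (mono (m 1) (m 2)) (F ^ j)

/-- A (one-dimensional, commutative) formal group law over `R`: a two-variable power
series `F(x,y)` with `F(x,0)=x`, `F(0,y)=y`, `F(x,y)=F(y,x)` and
`F(F(x,y),z)=F(x,F(y,z))`. -/
structure FormalGroupLaw (R : Type*) [CommRing R] where
  F : MvPowerSeries (Fin 2) R
  left_unit : ∀ i : ℕ, MvPowerSeries.coeff (mono i 0) F = if i = 1 then 1 else 0
  right_unit : ∀ j : ℕ, MvPowerSeries.coeff (mono 0 j) F = if j = 1 then 1 else 0
  comm : ∀ i j : ℕ, MvPowerSeries.coeff (mono i j) F = MvPowerSeries.coeff (mono j i) F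
  assoc : assocLeft F = assocRight F

/-- The `n`-series `[n](t)` of a formal group law, defined by `[0](t) = 0` and
`[n+1](t) = F([n](t), t)`. -/
def nSeries (Φ : FormalGroupLaw R) : ℕ → PowerSeries R
  | 0 => 0
  | n + 1 => subst2 Φ.F (nSeries Φ n)

open Classical in
/-- Evaluation of a power series at a nilpotent element (the sum is finite). -/
def nilEval (f : PowerSeries R) (a : R) : R :=
  if h : IsNilpotent a then ∑ i ∈ Finset.range h.choose, PowerSeries.coeff i f * a ^ i
  else 0

open Classical in
/-- Evaluation of a two-variable power series at a pair of nilpotent elements. -/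
def nilEval₂ (F : MvPowerSeries (Fin 2) R) (a b : R) : R :=
  if h : ∃ N, a ^ N = 0 ∧ b ^ N = 0 then
    ∑ i ∈ Finset.range h.choose, ∑ j ∈ Finset.range h.choose,
      MvPowerSeries.coeff (mono i j) F * a ^ i * b ^ j
  else 0

open Classical in
/-- The one-variable power series `x ↦ F(x, c)` for `c` nilpotent. -/
def addConst (F : MvPowerSeries (Fin 2) R) (c : R) : PowerSeries R :=
  if h : IsNilpotent c then
    PowerSeries.mk fun n => ∑ j ∈ Finset.range h.choose,
      MvPowerSeries.coeff (mono n j) F * c ^ j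
  else 0

/-- A homomorphism from a finite abelian group `A` to the formal group of `F`:
a function with nilpotent values, sending `0` to `0` and `+` to formal addition. -/
def IsHom (F : MvPowerSeries (Fin 2) R) {A : Type*} [AddCommGroup A] (ℓ : A → R) : Prop :=
  ℓ 0 = 0 ∧ (∀ a, IsNilpotent (ℓ a)) ∧ ∀ a b : A, ℓ (a + b) = nilEval₂ F (ℓ a) (ℓ b)

end FGL

/-!
The series `x +_F ℓ(a)` vanishes at `x = ℓ(-a)`, since `ℓ(-a) +_F ℓ(a) = ℓ(0) = 0`. Evaluation
at a nilpotent element is a truncated polynomial evaluation, so the factor theorem gives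
`x +_F ℓ(a) = (x - ℓ(-a)) · g` in `R⟦X⟧`. Comparing coefficients of `x`, `g(0)` is
`∂F/∂x(0, ℓ(a)) + ℓ(-a) · g'(0)`, a unit (`≡ 1` modulo nilpotents) plus a nilpotent,
so `g` is a unit. Multiplying over `a` and reindexing by `a ↦ -a` gives the factorization;
`y(ℓ(b))` vanishes through its factor at `a = -b`.
-/

namespace FGL

open PowerSeries

variable {R : Type*} [CommRing R] {a b c : R} {M N : ℕ}

theorem sum_range_mul_pow_of_pow_eq_zero (f : ℕ → R) (hN : a ^ N = 0) (h : N ≤ M) :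
    ∑ i ∈ range M, f i * a ^ i = ∑ i ∈ range N, f i * a ^ i := by
  refine (sum_subset (range_subset_range.2 h) fun i _ hi => ?_).symm
  rw [pow_eq_zero_of_le (by simpa using hi) hN, mul_zero]

theorem sum_range_mul_pow_congr (f : ℕ → R) (hN : a ^ N = 0) (hM : a ^ M = 0) :
    ∑ i ∈ range N, f i * a ^ i = ∑ i ∈ range M, f i * a ^ i := by
  rcases le_total N M with h | h
  · exact (sum_range_mul_pow_of_pow_eq_zero f hN h).symm
  · exact sum_range_mul_pow_of_pow_eq_zero f hM h

theorem eval_eq_sum_range_of_pow_eq_zero (p : Polynomial R) (hN : a ^ N = 0) :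
    p.eval a = ∑ i ∈ range N, p.coeff i * a ^ i := by
  rw [p.eval_eq_sum_range' ((Nat.lt_succ_self _).trans_le (le_max_left _ N))]
  exact sum_range_mul_pow_of_pow_eq_zero _ hN (le_max_right _ _)

theorem nilEval_eq_sum (f : PowerSeries R) (hN : a ^ N = 0) :
    nilEval f a = ∑ i ∈ range N, coeff i f * a ^ i := by
  have ha : IsNilpotent a := ⟨N, hN⟩
  rw [nilEval, dif_pos ha]
  exact sum_range_mul_pow_congr _ ha.choose_spec hN

theorem nilEval_eq_eval_trunc (f : PowerSeries R) (hN : a ^ N = 0) :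
    nilEval f a = (trunc N f).eval a := by
  rw [nilEval_eq_sum f hN, eval_eq_sum_range_of_pow_eq_zero _ hN]
  exact sum_congr rfl fun i hi => by rw [coeff_trunc, if_pos (mem_range.1 hi)]

theorem nilEval_one (ha : IsNilpotent a) : nilEval (1 : PowerSeries R) a = 1 := by
  obtain ⟨N, hN⟩ := ha
  rw [nilEval_eq_sum 1 (pow_eq_zero_of_le N.le_succ hN), sum_range_succ']
  simp [coeff_one]

theorem nilEval_mul (f g : PowerSeries R) (ha : IsNilpotent a) :
    nilEval (f * g) a = nilEval f a * nilEval g a := by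
  obtain ⟨N, hN⟩ := ha
  rw [nilEval_eq_sum (f * g) hN, nilEval_eq_eval_trunc f hN, nilEval_eq_eval_trunc g hN,
    ← Polynomial.eval_mul, eval_eq_sum_range_of_pow_eq_zero _ hN]
  refine sum_congr rfl fun i hi => ?_
  rw [coeff_mul_eq_coeff_trunc_mul_trunc f g (mem_range.1 hi), ← Polynomial.coe_mul,
    Polynomial.coeff_coe]

theorem nilEval_prod {ι : Type*} (s : Finset ι) (f : ι → PowerSeries R) (ha : IsNilpotent a) :
    nilEval (∏ i ∈ s, f i) a = ∏ i ∈ s, nilEval (f i) a :=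
  map_prod (MonoidHom.mk ⟨(nilEval · a), nilEval_one ha⟩ fun f g => nilEval_mul f g ha) f s

theorem X_sub_C_dvd_of_nilEval_eq_zero {f : PowerSeries R} (hc : IsNilpotent c)
    (hf : nilEval f c = 0) : X - C c ∣ f := by
  obtain ⟨N, hN⟩ := hc
  rw [eq_X_pow_mul_shift_add_trunc N f]
  refine dvd_add (Dvd.dvd.mul_right ?_ _) ?_
  · simpa [← map_pow, hN] using sub_dvd_pow_sub_pow X (C c) N
  · have hroot : (trunc N f).IsRoot c := by rw [Polynomial.IsRoot, ← nilEval_eq_eval_trunc f hN, hf]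
    simpa using map_dvd Polynomial.coeToPowerSeries.ringHom (Polynomial.dvd_iff_isRoot.2 hroot)

theorem isUnit_of_eq_X_sub_C_mul {f g : PowerSeries R} (hc : IsNilpotent c)
    (hf : f = (X - C c) * g) (hf₁ : IsUnit (coeff 1 f)) : IsUnit g := by
  have hg₀ : coeff 0 g = coeff 1 f + c * coeff 1 g := by
    rw [hf, sub_mul, map_sub, coeff_succ_X_mul, coeff_C_mul]
    ring
  rw [isUnit_iff_constantCoeff, ← coeff_zero_eq_constantCoeff_apply, hg₀]
  exact ((Commute.all _ _).isNilpotent_mul_right hc).isUnit_add_left_of_commute hf₁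
    (Commute.all _ _)

theorem exists_unit_mul_X_sub_C {f : PowerSeries R} (hc : IsNilpotent c) (hf : nilEval f c = 0)
    (hf₁ : IsUnit (coeff 1 f)) : ∃ u : (PowerSeries R)ˣ, f = (u : PowerSeries R) * (X - C c) := by
  obtain ⟨g, hg⟩ := X_sub_C_dvd_of_nilEval_eq_zero hc hf
  exact ⟨(isUnit_of_eq_X_sub_C_mul hc hg hf₁).unit, by rw [IsUnit.unit_spec, hg, mul_comm]⟩

theorem nilEval₂_eq_sum (F : MvPowerSeries (Fin 2) R) (ha : a ^ N = 0) (hb : b ^ N = 0) :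
    nilEval₂ F a b = ∑ i ∈ range N, ∑ j ∈ range N,
      MvPowerSeries.coeff (mono i j) F * a ^ i * b ^ j := by
  have h : ∃ n, a ^ n = 0 ∧ b ^ n = 0 := ⟨N, ha, hb⟩
  obtain ⟨ha', hb'⟩ := h.choose_spec
  have regroup : ∀ K L, ∑ i ∈ range K, ∑ j ∈ range L,
      MvPowerSeries.coeff (mono i j) F * a ^ i * b ^ j =
        ∑ i ∈ range K, (∑ j ∈ range L, MvPowerSeries.coeff (mono i j) F * b ^ j) * a ^ i := by
    intro K L
    simp only [sum_mul]
    exact sum_congr rfl fun i _ => sum_congr rfl fun j _ => by ring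
  rw [nilEval₂, dif_pos h, regroup, regroup, sum_range_mul_pow_congr _ ha' ha]
  exact sum_congr rfl fun i _ => congrArg (· * a ^ i) (sum_range_mul_pow_congr _ hb' hb)

theorem coeff_addConst (F : MvPowerSeries (Fin 2) R) (hc : c ^ N = 0) (n : ℕ) :
    coeff n (addConst F c) = ∑ j ∈ range N, MvPowerSeries.coeff (mono n j) F * c ^ j := by
  have h : IsNilpotent c := ⟨N, hc⟩
  rw [addConst, dif_pos h, coeff_mk]
  exact sum_range_mul_pow_congr _ h.choose_spec hc

theorem nilEval_addConst (F : MvPowerSeries (Fin 2) R) (hb : IsNilpotent b)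
    (hc : IsNilpotent c) : nilEval (addConst F c) b = nilEval₂ F b c := by
  obtain ⟨N, hN⟩ := hb
  obtain ⟨M, hM⟩ := hc
  have hb' : b ^ (N + M) = 0 := pow_eq_zero_of_le (N.le_add_right M) hN
  have hc' : c ^ (N + M) = 0 := pow_eq_zero_of_le (M.le_add_left N) hM
  rw [nilEval_eq_sum _ hb', nilEval₂_eq_sum F hb' hc']
  refine sum_congr rfl fun i _ => ?_
  rw [coeff_addConst F hc', sum_mul]
  exact sum_congr rfl fun j _ => by ring

theorem isUnit_coeff_one_addConst (Φ : FormalGroupLaw R) (hc : IsNilpotent c) :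
    IsUnit (coeff 1 (addConst Φ.F c)) := by
  obtain ⟨N, hN⟩ := hc
  rw [coeff_addConst Φ.F (pow_eq_zero_of_le N.le_succ hN), sum_range_succ', Φ.left_unit,
    if_pos rfl, pow_zero, mul_one]
  refine IsNilpotent.isUnit_add_one (isNilpotent_sum fun j _ => ?_)
  exact (Commute.all _ _).isNilpotent_mul_left (IsNilpotent.pow_succ j ⟨N, hN⟩)

theorem IsHom.nilEval_addConst {F : MvPowerSeries (Fin 2) R} {A : Type*} [AddCommGroup A]
    {ℓ : A → R} (hℓ : IsHom F ℓ) (a b : A) : nilEval (addConst F (ℓ a)) (ℓ b) = ℓ (b + a) := by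
  rw [FGL.nilEval_addConst F (hℓ.2.1 b) (hℓ.2.1 a), hℓ.2.2]

end FGL

open FGL in
/-- for a homomorphism `ℓ : A → R` to the formal group of `F`, Lubin's
power series `y(x) = ∏_{a∈A} F(x, ℓ(a))` equals a unit of `R[[x]]` times
`∏_{a∈A}(x - ℓ(a))`, and `y(ℓ(b)) = 0` for every `b ∈ A`. -/
theorem lubin_series_factorization {R : Type*} [CommRing R] (Φ : FormalGroupLaw R)
    {A : Type*} [AddCommGroup A] [Fintype A]
    (ℓ : A → R) (hℓ : IsHom Φ.F ℓ) :
    (∃ ε : (PowerSeries R)ˣ,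
      (∏ a : A, addConst Φ.F (ℓ a)) =
        (ε : PowerSeries R) * ∏ a : A, (PowerSeries.X - PowerSeries.C (ℓ a))) ∧
    ∀ b : A, nilEval (∏ a : A, addConst Φ.F (ℓ a)) (ℓ b) = 0 := by
  have root := hℓ.nilEval_addConst
  obtain ⟨hzero, hnil, -⟩ := hℓ
  choose u hu using fun a : A => exists_unit_mul_X_sub_C (hnil (-a))
    (by rw [root, neg_add_cancel, hzero]) (isUnit_coeff_one_addConst Φ (hnil a))
  refine ⟨⟨∏ a, u a, ?_⟩, fun b => ?_⟩
  · rw [Units.coe_prod, ← Fintype.prod_equiv (Equiv.neg A)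
      (fun a => PowerSeries.X - PowerSeries.C (ℓ (-a)))
      (fun a => PowerSeries.X - PowerSeries.C (ℓ a)) fun _ => rfl, ← prod_mul_distrib]
    exact prod_congr rfl fun a _ => hu a
  · rw [nilEval_prod _ _ (hnil b)]
    exact prod_eq_zero (mem_univ (-b)) (by rw [root, add_neg_cancel, hzero])
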